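/- In a B_1-EPG representation, any family of paths in which each path has shape ⌞ (i.e., consists of a horizontal segment extending rightward and a vertical segment extending upward from the bend point) or shape ⌝ (a vertical segment extending downward and a horizontal segment extending leftward from the bend point), with zero-bend paths counted as degenerate ⌞'s, satisfies the Helly property: every pairwise edge-intersecting subfamily has a common grid edge. -/

import Mathlib

/-- A grid edge: a lattice point together with a direction; `true` means the
horizontal edge from `pt` to `pt + (1,0)`, `false` the vertical edge from `pt`
to `pt + (0,1)`. -/
structure GridEdge where
  pt : ℤ × ℤ
  horiz : Bool
deriving DecidableEq

/-- The two endpoints of a grid edge. -/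
def GridEdge.endpoints (e : GridEdge) : Finset (ℤ × ℤ) :=
  {e.pt, if e.horiz then (e.pt.1 + 1, e.pt.2) else (e.pt.1, e.pt.2 + 1)}

/-- Two distinct grid edges are adjacent when they share an endpoint. -/
def GridEdge.adj (e f : GridEdge) : Prop :=
  e ≠ f ∧ (e.endpoints ∩ f.endpoints).Nonempty

/-- A simple path in the integer grid, given by its sequence of edges:
consecutive edges are adjacent, all edges are distinct, and
non-consecutive edges are non-adjacent. -/
structure GridPath where
  edges : List GridEdge
  nonempty : edges ≠ []
  nodup : edges.Nodup
  chain : edges.Chain' GridEdge.adj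
  simple : ∀ i j : ℕ, i + 1 < j → ∀ (hi : i < edges.length) (hj : j < edges.length),
    ¬ GridEdge.adj (edges.get ⟨i, hi⟩) (edges.get ⟨j, hj⟩)

/-- The number of bends of a grid path: consecutive pairs of edges with
different directions. -/
def GridPath.bends (P : GridPath) : ℕ :=
  ((P.edges.zip P.edges.tail).filter fun q => q.1.horiz != q.2.horiz).length

/-- Two paths (edge-)intersect when they share a grid edge. -/
def GridPath.Inter (P Q : GridPath) : Prop :=
  ∃ e : GridEdge, e ∈ P.edges ∧ e ∈ Q.edges

/-- A relevant edge of a path: an extremity (first or last) edge or a bend edge. -/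
def GridPath.IsRelevant (P : GridPath) (e : GridEdge) : Prop :=
  P.edges.head? = some e ∨ P.edges.getLast? = some e ∨
    ∃ q ∈ P.edges.zip P.edges.tail, q.1.horiz ≠ q.2.horiz ∧ (e = q.1 ∨ e = q.2)

/-- An EPG representation of a graph: vertices are assigned grid paths, and two
distinct vertices are adjacent iff their paths share a grid edge. -/
def IsEPGRep {V : Type*} (G : SimpleGraph V) (P : V → GridPath) : Prop :=
  ∀ u v : V, u ≠ v → (G.Adj u v ↔ (P u).Inter (P v))

/-- The Helly property for a family of grid paths: every pairwise
edge-intersecting subfamily has a grid edge common to all its members. -/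
def HellyEPG {ι : Type*} (P : ι → GridPath) : Prop :=
  ∀ T : Set ι, (∀ i ∈ T, ∀ j ∈ T, (P i).Inter (P j)) →
    ∃ e : GridEdge, ∀ i ∈ T, e ∈ (P i).edges

/-- The set of maximal cliques of a graph. -/
def maxCliques {V : Type*} (G : SimpleGraph V) : Set (Set V) :=
  {s | G.IsClique s ∧ ∀ t : Set V, G.IsClique t → s ⊆ t → s = t}

/-- Shape `⌞`: all edges lie on the horizontal ray extending rightward or the
vertical ray extending upward from the corner `c` (zero-bend paths are
degenerate `⌞`'s). -/
def ShapeL (P : GridPath) : Prop :=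
  ∃ c : ℤ × ℤ, ∀ e ∈ P.edges,
    (e.horiz = true ∧ e.pt.2 = c.2 ∧ c.1 ≤ e.pt.1) ∨
    (e.horiz = false ∧ e.pt.1 = c.1 ∧ c.2 ≤ e.pt.2)

/-- Shape `⌝`: all edges lie on the horizontal ray extending leftward or the
vertical ray extending downward from the corner `c`. -/
def ShapeUR (P : GridPath) : Prop :=
  ∃ c : ℤ × ℤ, ∀ e ∈ P.edges,
    (e.horiz = true ∧ e.pt.2 = c.2 ∧ e.pt.1 + 1 ≤ c.1) ∨
    (e.horiz = false ∧ e.pt.1 = c.1 ∧ e.pt.2 + 1 ≤ c.2)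

namespace HellyAux

def onRay (sh : Bool) (c : ℤ × ℤ) (e : GridEdge) : Prop :=
  (e.horiz = true ∧ e.pt.2 = c.2 ∧ (if sh then c.1 ≤ e.pt.1 else e.pt.1 + 1 ≤ c.1)) ∨
  (e.horiz = false ∧ e.pt.1 = c.1 ∧ (if sh then c.2 ≤ e.pt.2 else e.pt.2 + 1 ≤ c.2))

def tpar (sh : Bool) (c : ℤ × ℤ) (e : GridEdge) : ℤ :=
  if sh then (if e.horiz then e.pt.1 - c.1 else c.2 - e.pt.2 - 1)
  else (if e.horiz then e.pt.1 - c.1 + 1 else c.2 - e.pt.2)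

def epar (sh : Bool) (c : ℤ × ℤ) (s : ℤ) : GridEdge :=
  if sh then (if 0 ≤ s then ⟨(c.1 + s, c.2), true⟩ else ⟨(c.1, c.2 - s - 1), false⟩)
  else (if s ≤ 0 then ⟨(c.1 - 1 + s, c.2), true⟩ else ⟨(c.1, c.2 - s), false⟩)

theorem tpar_epar (sh : Bool) (c : ℤ × ℤ) (s : ℤ) : tpar sh c (epar sh c s) = s := by
  cases sh
  · by_cases h : s ≤ 0 <;> simp [epar, h, tpar] <;> omega
  · by_cases h : (0:ℤ) ≤ s <;> simp [epar, h, tpar] <;> omega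

theorem epar_tpar {sh : Bool} {c : ℤ × ℤ} {e : GridEdge} (h : onRay sh c e) :
    epar sh c (tpar sh c e) = e := by
  obtain ⟨⟨x, y⟩, b⟩ := e
  rcases h with ⟨hb, h1, h2⟩ | ⟨hb, h1, h2⟩ <;> cases sh <;>
    simp only [Bool.false_eq_true, Bool.true_eq_false, ite_true, ite_false] at h2 <;>
    subst hb <;> subst h1
  · -- horiz, sh = false
    simp only [tpar, epar, if_false, if_true, Bool.false_eq_true, ite_false, ite_true]
    rw [if_pos (by omega : x - c.1 + 1 ≤ 0)]
    have : c.1 - 1 + (x - c.1 + 1) = x := by ring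
    rw [this]
  · -- horiz, sh = true
    simp only [tpar, epar, ite_false, ite_true]
    rw [if_pos (by omega : (0:ℤ) ≤ x - c.1)]
    have : c.1 + (x - c.1) = x := by ring
    rw [this]
  · -- vert, sh = false
    simp only [tpar, epar, Bool.false_eq_true, ite_false, ite_true]
    rw [if_neg (by omega : ¬ (c.2 - y ≤ 0))]
    have : c.2 - (c.2 - y) = y := by ring
    rw [this]
  · -- vert, sh = true
    simp only [tpar, epar, Bool.false_eq_true, ite_false, ite_true]
    rw [if_neg (by omega : ¬ ((0:ℤ) ≤ c.2 - y - 1))]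
    have : c.2 - (c.2 - y - 1) - 1 = y := by ring
    rw [this]

theorem onRay_epar (sh : Bool) (c : ℤ × ℤ) (s : ℤ) : onRay sh c (epar sh c s) := by
  cases sh
  · by_cases h : s ≤ 0 <;> simp [epar, h, onRay] <;> omega
  · by_cases h : (0:ℤ) ≤ s <;> simp [epar, h, onRay] <;> omega

theorem adj_step {sh : Bool} {c : ℤ × ℤ} {e f : GridEdge}
    (he : onRay sh c e) (hf : onRay sh c f) (hadj : GridEdge.adj e f) :
    tpar sh c f = tpar sh c e + 1 ∨ tpar sh c f = tpar sh c e - 1 := by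
  obtain ⟨hne, ⟨v, hv⟩⟩ := hadj
  rw [Finset.mem_inter] at hv
  obtain ⟨hv1, hv2⟩ := hv
  obtain ⟨⟨ex, ey⟩, eb⟩ := e
  obtain ⟨⟨fx, fy⟩, fb⟩ := f
  obtain ⟨vx, vy⟩ := v
  simp only [ne_eq, GridEdge.mk.injEq, Prod.mk.injEq] at hne
  cases eb <;> cases fb <;>
    simp only [onRay, Bool.true_eq_false, Bool.false_eq_true, false_and, true_and,
      false_or, or_false] at he hf <;>
    simp only [GridEdge.endpoints, Bool.false_eq_true, Bool.true_eq_false, ite_true, ite_false,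
      Finset.mem_insert, Finset.mem_singleton, Prod.mk.injEq] at hv1 hv2
  -- vert vert
  · obtain ⟨h1, h2⟩ := he; obtain ⟨h1', h2'⟩ := hf
    by_cases hx : ex = fx
    · have hy : ¬ ey = fy := fun h => hne ⟨⟨hx, h⟩, rfl⟩
      rcases hv1 with ⟨a1, a2⟩ | ⟨a1, a2⟩ <;> rcases hv2 with ⟨b1, b2⟩ | ⟨b1, b2⟩ <;>
        cases sh <;> simp_all [tpar] <;> omega
    · rcases hv1 with ⟨a1, a2⟩ | ⟨a1, a2⟩ <;> rcases hv2 with ⟨b1, b2⟩ | ⟨b1, b2⟩ <;>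
        cases sh <;> simp_all [tpar] <;> omega
  -- vert horiz
  · obtain ⟨h1, h2⟩ := he; obtain ⟨h1', h2'⟩ := hf
    rcases hv1 with ⟨a1, a2⟩ | ⟨a1, a2⟩ <;> rcases hv2 with ⟨b1, b2⟩ | ⟨b1, b2⟩ <;>
      cases sh <;> simp_all [tpar] <;> omega
  -- horiz vert
  · obtain ⟨h1, h2⟩ := he; obtain ⟨h1', h2'⟩ := hf
    rcases hv1 with ⟨a1, a2⟩ | ⟨a1, a2⟩ <;> rcases hv2 with ⟨b1, b2⟩ | ⟨b1, b2⟩ <;>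
      cases sh <;> simp_all [tpar] <;> omega
  -- horiz horiz
  · obtain ⟨h1, h2⟩ := he; obtain ⟨h1', h2'⟩ := hf
    by_cases hx : ey = fy
    · have hy : ¬ ex = fx := fun h => hne ⟨⟨h, hx⟩, rfl⟩
      rcases hv1 with ⟨a1, a2⟩ | ⟨a1, a2⟩ <;> rcases hv2 with ⟨b1, b2⟩ | ⟨b1, b2⟩ <;>
        cases sh <;> simp_all [tpar] <;> omega
    · rcases hv1 with ⟨a1, a2⟩ | ⟨a1, a2⟩ <;> rcases hv2 with ⟨b1, b2⟩ | ⟨b1, b2⟩ <;>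
        cases sh <;> simp_all [tpar] <;> omega

end HellyAux
namespace HellyAux

def stepRel (a b : ℤ) : Prop := b = a + 1 ∨ b = a - 1

theorem chain_map {sh : Bool} {c : ℤ × ℤ} :
    ∀ (l : List GridEdge), (∀ e ∈ l, onRay sh c e) → l.Chain' GridEdge.adj →
      (l.map (tpar sh c)).Chain' stepRel := by
  intro l
  induction l with
  | nil => intro _ _; exact List.IsChain.nil
  | cons e t ih =>
    intro hall hch
    cases t with
    | nil => exact List.IsChain.singleton _
    | cons f t' =>
      rw [List.Chain', List.isChain_cons_cons] at hch
      simp only [List.Chain', List.map_cons, List.isChain_cons_cons]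
      refine ⟨?_, ?_⟩
      · have := adj_step (hall e (by simp)) (hall f (by simp)) hch.1
        unfold stepRel; tauto
      · have := ih (fun x hx => hall x (List.mem_cons_of_mem _ hx)) hch.2
        simpa [List.Chain'] using this
  
theorem walk_up (s : ℤ) :
    ∀ (l : List ℤ), l.Chain' stepRel → ∀ a, l.head? = some a → a ≤ s →
      ∀ y ∈ l, s ≤ y → s ∈ l := by
  intro l
  induction l with
  | nil => intro _ a ha; simp at ha
  | cons a0 t ih =>
    intro hch a ha has y hy hsy
    simp only [List.head?_cons, Option.some_inj] at ha
    subst ha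
    rcases eq_or_lt_of_le has with heq | hlt
    · simp [← heq]
    · have hyt : y ∈ t := by
        rcases hy with _ | hy'
        · omega
        · assumption
      cases t with
      | nil => simp at hyt
      | cons b t' =>
        have hstep : stepRel a0 b := (List.isChain_cons_cons.mp hch).1
        have : s ∈ b :: t' := by
          apply ih (List.IsChain.tail hch) b rfl ?_ y hyt hsy
          unfold stepRel at hstep; omega
        exact List.mem_cons_of_mem _ this

theorem walk_down (s : ℤ) :
    ∀ (l : List ℤ), l.Chain' stepRel → ∀ a, l.head? = some a → s ≤ a →
      ∀ y ∈ l, y ≤ s → s ∈ l := by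
  intro l
  induction l with
  | nil => intro _ a ha; simp at ha
  | cons a0 t ih =>
    intro hch a ha has y hy hsy
    simp only [List.head?_cons, Option.some_inj] at ha
    subst ha
    rcases eq_or_lt_of_le has with heq | hlt
    · simp [heq]
    · have hyt : y ∈ t := by
        rcases hy with _ | hy'
        · omega
        · assumption
      cases t with
      | nil => simp at hyt
      | cons b t' =>
        have hstep : stepRel a0 b := (List.isChain_cons_cons.mp hch).1
        have : s ∈ b :: t' := by
          apply ih (List.IsChain.tail hch) b rfl ?_ y hyt hsy
          unfold stepRel at hstep; omega
        exact List.mem_cons_of_mem _ this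

theorem list_ivt {l : List ℤ} (hch : l.Chain' stepRel) {x y s : ℤ}
    (hx : x ∈ l) (hy : y ∈ l) (h1 : x ≤ s) (h2 : s ≤ y) : s ∈ l := by
  cases l with
  | nil => simp at hx
  | cons a t =>
    rcases le_total a s with h | h
    · exact walk_up s (a :: t) hch a rfl h y hy h2
    · exact walk_down s (a :: t) hch a rfl h x hx h1

/-- The interval property of a shaped path's edge list. -/
theorem path_ivt {sh : Bool} {c : ℤ × ℤ} {l : List GridEdge}
    (hray : ∀ e ∈ l, onRay sh c e) (hch : l.Chain' GridEdge.adj)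
    {e f : GridEdge} (he : e ∈ l) (hf : f ∈ l) {s : ℤ}
    (h1 : tpar sh c e ≤ s) (h2 : s ≤ tpar sh c f) : epar sh c s ∈ l := by
  have hmap := chain_map l hray hch
  have hs : s ∈ l.map (tpar sh c) :=
    list_ivt hmap (List.mem_map_of_mem he) (List.mem_map_of_mem hf) h1 h2
  obtain ⟨g, hg, hgs⟩ := List.mem_map.mp hs
  rw [← hgs, epar_tpar (hray g hg)]
  exact hg

end HellyAux
namespace HellyAux

structure NP where
  E : List GridEdge
  sh : Bool
  c : ℤ × ℤ
  ray : ∀ e ∈ E, onRay sh c e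
  ivt : ∀ e ∈ E, ∀ f ∈ E, ∀ s : ℤ, tpar sh c e ≤ s → s ≤ tpar sh c f → epar sh c s ∈ E

/-- Row of any horizontal edge is the corner row. -/
theorem row_eq (X : NP) {e : GridEdge} (he : e ∈ X.E) (hh : e.horiz = true) :
    e.pt.2 = X.c.2 := by
  rcases X.ray e he with ⟨_, h, _⟩ | ⟨hb, _, _⟩
  · exact h
  · rw [hh] at hb; cases hb

/-- Column of any vertical edge is the corner column. -/
theorem col_eq (X : NP) {e : GridEdge} (he : e ∈ X.E) (hh : e.horiz = false) :
    e.pt.1 = X.c.1 := by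
  rcases X.ray e he with ⟨hb, _, _⟩ | ⟨_, h, _⟩
  · rw [hh] at hb; cases hb
  · exact h

theorem horiz_side (X : NP) {e : GridEdge} (he : e ∈ X.E) (hh : e.horiz = true) :
    if X.sh then X.c.1 ≤ e.pt.1 else e.pt.1 + 1 ≤ X.c.1 := by
  rcases X.ray e he with ⟨_, _, h⟩ | ⟨hb, _, _⟩
  · exact h
  · rw [hh] at hb; cases hb

theorem vert_side (X : NP) {e : GridEdge} (he : e ∈ X.E) (hh : e.horiz = false) :
    if X.sh then X.c.2 ≤ e.pt.2 else e.pt.2 + 1 ≤ X.c.2 := by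
  rcases X.ray e he with ⟨hb, _, _⟩ | ⟨_, _, h⟩
  · rw [hh] at hb; cases hb
  · exact h

/-- Horizontal betweenness. -/
theorem betweenH (X : NP) {e f : GridEdge} (he : e ∈ X.E) (hf : f ∈ X.E)
    (hh : e.horiz = true) (hh' : f.horiz = true) {z : ℤ}
    (h1 : e.pt.1 ≤ z) (h2 : z ≤ f.pt.1) :
    (⟨(z, X.c.2), true⟩ : GridEdge) ∈ X.E := by
  have hse := horiz_side X he hh
  have hsf := horiz_side X hf hh'
  cases hsh : X.sh
  · rw [hsh] at hse hsf; simp only [ite_false, Bool.false_eq_true] at hse hsf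
    have := X.ivt e he f hf (z - X.c.1 + 1) (by simp [tpar, hh, hsh]; omega)
      (by simp [tpar, hh', hsh]; omega)
    rw [hsh] at this
    simp only [epar, ite_false, Bool.false_eq_true] at this
    rw [if_pos (by omega : z - X.c.1 + 1 ≤ 0)] at this
    have hq : X.c.1 - 1 + (z - X.c.1 + 1) = z := by ring
    rwa [hq] at this
  · rw [hsh] at hse hsf; simp only [ite_true] at hse hsf
    have := X.ivt e he f hf (z - X.c.1) (by simp [tpar, hh, hsh]; omega)
      (by simp [tpar, hh', hsh]; omega)
    rw [hsh] at this
    simp only [epar, ite_true] at this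
    rw [if_pos (by omega : (0:ℤ) ≤ z - X.c.1)] at this
    have hq : X.c.1 + (z - X.c.1) = z := by ring
    rwa [hq] at this

/-- Vertical betweenness. -/
theorem betweenV (X : NP) {e f : GridEdge} (he : e ∈ X.E) (hf : f ∈ X.E)
    (hh : e.horiz = false) (hh' : f.horiz = false) {z : ℤ}
    (h1 : e.pt.2 ≤ z) (h2 : z ≤ f.pt.2) :
    (⟨(X.c.1, z), false⟩ : GridEdge) ∈ X.E := by
  have hse := vert_side X he hh
  have hsf := vert_side X hf hh'
  cases hsh : X.sh
  · rw [hsh] at hse hsf; simp only [ite_false, Bool.false_eq_true] at hse hsf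
    have := X.ivt f hf e he (X.c.2 - z) (by simp [tpar, hh', hsh]; omega)
      (by simp [tpar, hh, hsh]; omega)
    rw [hsh] at this
    simp only [epar, ite_false, Bool.false_eq_true] at this
    rw [if_neg (by omega : ¬ (X.c.2 - z ≤ 0))] at this
    have hq : X.c.2 - (X.c.2 - z) = z := by ring
    rwa [hq] at this
  · rw [hsh] at hse hsf; simp only [ite_true] at hse hsf
    have := X.ivt f hf e he (X.c.2 - z - 1) (by simp [tpar, hh', hsh]; omega)
      (by simp [tpar, hh, hsh]; omega)
    rw [hsh] at this
    simp only [epar, ite_true] at this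
    rw [if_neg (by omega : ¬ ((0:ℤ) ≤ X.c.2 - z - 1))] at this
    have hq : X.c.2 - (X.c.2 - z - 1) - 1 = z := by ring
    rwa [hq] at this

def cornerH (sh : Bool) (c : ℤ × ℤ) : GridEdge := ⟨(if sh then c.1 else c.1 - 1, c.2), true⟩
def cornerV (sh : Bool) (c : ℤ × ℤ) : GridEdge := ⟨(c.1, if sh then c.2 else c.2 - 1), false⟩

/-- A bent path contains its two corner edges. -/
theorem corners (X : NP) {e f : GridEdge} (he : e ∈ X.E) (hf : f ∈ X.E)
    (hh : e.horiz = true) (hh' : f.horiz = false) :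
    cornerH X.sh X.c ∈ X.E ∧ cornerV X.sh X.c ∈ X.E := by
  have hse := horiz_side X he hh
  have hsf := vert_side X hf hh'
  cases hsh : X.sh
  · rw [hsh] at hse hsf; simp only [ite_false, Bool.false_eq_true] at hse hsf
    constructor
    · have := X.ivt e he f hf 0 (by simp [tpar, hh, hsh]; omega)
        (by simp [tpar, hh', hsh]; omega)
      rw [hsh] at this
      simp only [epar, ite_false, Bool.false_eq_true] at this
      rw [if_pos (by omega : (0:ℤ) ≤ 0)] at this
      simpa [cornerH, hsh, show X.c.1 - 1 + 0 = X.c.1 - 1 by ring] using this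
    · have := X.ivt e he f hf 1 (by simp [tpar, hh, hsh]; omega)
        (by simp [tpar, hh', hsh]; omega)
      rw [hsh] at this
      simp only [epar, ite_false, Bool.false_eq_true] at this
      rw [if_neg (by omega : ¬ ((1:ℤ) ≤ 0))] at this
      simpa [cornerV, hsh, show X.c.2 - 1 = X.c.2 - 1 by ring] using this
  · rw [hsh] at hse hsf; simp only [ite_true] at hse hsf
    constructor
    · have := X.ivt f hf e he 0 (by simp [tpar, hh', hsh]; omega)
        (by simp [tpar, hh, hsh]; omega)
      rw [hsh] at this
      simp only [epar, ite_true] at this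
      rw [if_pos (by omega : (0:ℤ) ≤ (0:ℤ))] at this
      simpa [cornerH, hsh, show X.c.1 + 0 = X.c.1 by ring] using this
    · have := X.ivt f hf e he (-1) (by simp [tpar, hh', hsh]; omega)
        (by simp [tpar, hh, hsh]; omega)
      rw [hsh] at this
      simp only [epar, ite_true] at this
      rw [if_neg (by omega : ¬ ((0:ℤ) ≤ -1))] at this
      simpa [cornerV, hsh, show X.c.2 - (-1) - 1 = X.c.2 by ring] using this

end HellyAux
namespace HellyAux

theorem median3 (a b c : ℤ) : ∃ m : ℤ,
    (min a b ≤ m ∧ m ≤ max a b) ∧ (min a c ≤ m ∧ m ≤ max a c) ∧ (min b c ≤ m ∧ m ≤ max b c) :=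
  ⟨max (min a b) (min (max a b) c), by omega⟩

theorem betweenH' (X : NP) {e f : GridEdge} (he : e ∈ X.E) (hf : f ∈ X.E)
    (hh : e.horiz = true) (hh' : f.horiz = true) {z : ℤ}
    (h1 : min e.pt.1 f.pt.1 ≤ z) (h2 : z ≤ max e.pt.1 f.pt.1) :
    (⟨(z, X.c.2), true⟩ : GridEdge) ∈ X.E := by
  rcases le_total e.pt.1 f.pt.1 with h | h
  · exact betweenH X he hf hh hh' (by omega) (by omega)
  · exact betweenH X hf he hh' hh (by omega) (by omega)

theorem betweenV' (X : NP) {e f : GridEdge} (he : e ∈ X.E) (hf : f ∈ X.E)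
    (hh : e.horiz = false) (hh' : f.horiz = false) {z : ℤ}
    (h1 : min e.pt.2 f.pt.2 ≤ z) (h2 : z ≤ max e.pt.2 f.pt.2) :
    (⟨(X.c.1, z), false⟩ : GridEdge) ∈ X.E := by
  rcases le_total e.pt.2 f.pt.2 with h | h
  · exact betweenV X he hf hh hh' (by omega) (by omega)
  · exact betweenV X hf he hh' hh (by omega) (by omega)

/-- Three paths, all pairwise sharing horizontal edges. -/
theorem threeH (X Y Z : NP) {e1 e2 e3 : GridEdge}
    (h1X : e1 ∈ X.E) (h1Y : e1 ∈ Y.E) (h1h : e1.horiz = true)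
    (h2X : e2 ∈ X.E) (h2Z : e2 ∈ Z.E) (h2h : e2.horiz = true)
    (h3Y : e3 ∈ Y.E) (h3Z : e3 ∈ Z.E) (h3h : e3.horiz = true) :
    ∃ g : GridEdge, g ∈ X.E ∧ g ∈ Y.E ∧ g ∈ Z.E := by
  obtain ⟨m, hm1, hm2, hm3⟩ := median3 e1.pt.1 e2.pt.1 e3.pt.1
  refine ⟨⟨(m, X.c.2), true⟩, ?_, ?_, ?_⟩
  · exact betweenH' X h1X h2X h1h h2h hm1.1 hm1.2
  · have hYX : Y.c.2 = X.c.2 := by rw [← row_eq Y h1Y h1h, row_eq X h1X h1h]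
    have := betweenH' Y h1Y h3Y h1h h3h hm2.1 hm2.2
    rwa [hYX] at this
  · have hZX : Z.c.2 = X.c.2 := by rw [← row_eq Z h2Z h2h, row_eq X h2X h2h]
    have := betweenH' Z h2Z h3Z h2h h3h hm3.1 hm3.2
    rwa [hZX] at this

/-- Three paths, all pairwise sharing vertical edges. -/
theorem threeV (X Y Z : NP) {e1 e2 e3 : GridEdge}
    (h1X : e1 ∈ X.E) (h1Y : e1 ∈ Y.E) (h1h : e1.horiz = false)
    (h2X : e2 ∈ X.E) (h2Z : e2 ∈ Z.E) (h2h : e2.horiz = false)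
    (h3Y : e3 ∈ Y.E) (h3Z : e3 ∈ Z.E) (h3h : e3.horiz = false) :
    ∃ g : GridEdge, g ∈ X.E ∧ g ∈ Y.E ∧ g ∈ Z.E := by
  obtain ⟨m, hm1, hm2, hm3⟩ := median3 e1.pt.2 e2.pt.2 e3.pt.2
  refine ⟨⟨(X.c.1, m), false⟩, ?_, ?_, ?_⟩
  · exact betweenV' X h1X h2X h1h h2h hm1.1 hm1.2
  · have hYX : Y.c.1 = X.c.1 := by rw [← col_eq Y h1Y h1h, col_eq X h1X h1h]
    have := betweenV' Y h1Y h3Y h1h h3h hm2.1 hm2.2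
    rwa [hYX] at this
  · have hZX : Z.c.1 = X.c.1 := by rw [← col_eq Z h2Z h2h, col_eq X h2X h2h]
    have := betweenV' Z h2Z h3Z h2h h3h hm3.1 hm3.2
    rwa [hZX] at this

/-- Mixed case: X,Y share a horizontal edge, Y,Z share a horizontal edge,
X,Z share a vertical edge. -/
theorem mixed1 (X Y Z : NP) {e1 e2 e3 : GridEdge}
    (h1X : e1 ∈ X.E) (h1Y : e1 ∈ Y.E) (h1h : e1.horiz = true)
    (h2Y : e2 ∈ Y.E) (h2Z : e2 ∈ Z.E) (h2h : e2.horiz = true)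
    (h3X : e3 ∈ X.E) (h3Z : e3 ∈ Z.E) (h3h : e3.horiz = false) :
    ∃ g : GridEdge, g ∈ X.E ∧ g ∈ Y.E ∧ g ∈ Z.E := by
  -- rows and columns
  have hrX : e1.pt.2 = X.c.2 := row_eq X h1X h1h
  have hrY : e1.pt.2 = Y.c.2 := row_eq Y h1Y h1h
  have hrY' : e2.pt.2 = Y.c.2 := row_eq Y h2Y h2h
  have hrZ : e2.pt.2 = Z.c.2 := row_eq Z h2Z h2h
  have hqX : e3.pt.1 = X.c.1 := col_eq X h3X h3h
  have hqZ : e3.pt.1 = Z.c.1 := col_eq Z h3Z h3h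
  -- X and Z are bent, same shape
  have hcornX := corners X h1X h3X h1h h3h
  have hcornZ := corners Z h2Z h3Z h2h h3h
  have hvsX := vert_side X h3X h3h
  have hvsZ := vert_side Z h3Z h3h
  have hsh : X.sh = Z.sh := by
    cases hx : X.sh <;> cases hz : Z.sh <;> rw [hx] at hvsX <;> rw [hz] at hvsZ <;>
      simp only [ite_true, ite_false, Bool.false_eq_true] at hvsX hvsZ <;> first | rfl | omega
  have hsX := horiz_side X h1X h1h
  have hsZ := horiz_side Z h2Z h2h
  have hsX2 := horiz_side X (hcornX.1) (by simp [cornerH])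
  have hsZ2 := horiz_side Z (hcornZ.1) (by simp [cornerH])
  have hQ : X.c.1 = Z.c.1 := by rw [← hqX, hqZ]
  have hZX : Z.c.2 = X.c.2 := by rw [← hrZ, hrY', ← hrY, hrX]
  have hYX : Y.c.2 = X.c.2 := by rw [← hrY, hrX]
  cases hx : X.sh
  · -- shape ⌝ : take max
    rw [hx] at hsX; simp only [ite_false, Bool.false_eq_true] at hsX
    have hz : Z.sh = false := by rw [← hsh, hx]
    rw [hz] at hsZ; simp only [ite_false, Bool.false_eq_true] at hsZ
    refine ⟨⟨(max e1.pt.1 e2.pt.1, X.c.2), true⟩, ?_, ?_, ?_⟩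
    · exact betweenH X h1X hcornX.1 h1h (by simp [cornerH]) (le_max_left _ _)
        (by simp [cornerH, hx]; omega)
    · have := betweenH' Y h1Y h2Y h1h h2h (z := max e1.pt.1 e2.pt.1) (by omega) (by omega)
      rwa [hYX] at this
    · have := betweenH Z h2Z hcornZ.1 h2h (by simp [cornerH]) (z := max e1.pt.1 e2.pt.1)
        (le_max_right _ _) (by simp [cornerH, hz]; omega)
      rwa [hZX] at this
  · -- shape ⌞ : take min
    rw [hx] at hsX; simp only [ite_true] at hsX
    have hz : Z.sh = true := by rw [← hsh, hx]
    rw [hz] at hsZ; simp only [ite_true] at hsZ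
    refine ⟨⟨(min e1.pt.1 e2.pt.1, X.c.2), true⟩, ?_, ?_, ?_⟩
    · exact betweenH X hcornX.1 h1X (by simp [cornerH]) h1h
        (by simp [cornerH, hx]; omega) (min_le_left _ _)
    · have := betweenH' Y h1Y h2Y h1h h2h (z := min e1.pt.1 e2.pt.1) (by omega) (by omega)
      rwa [hYX] at this
    · have := betweenH Z hcornZ.1 h2Z (by simp [cornerH]) h2h (z := min e1.pt.1 e2.pt.1)
        (by simp [cornerH, hz]; omega) (min_le_right _ _)
      rwa [hZX] at this

end HellyAux
namespace HellyAux

/-- Mixed case: X,Y share a horizontal edge, X,Z and Y,Z share vertical edges. -/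
theorem mixed2 (X Y Z : NP) {e1 e2 e3 : GridEdge}
    (h1X : e1 ∈ X.E) (h1Y : e1 ∈ Y.E) (h1h : e1.horiz = true)
    (h2X : e2 ∈ X.E) (h2Z : e2 ∈ Z.E) (h2h : e2.horiz = false)
    (h3Y : e3 ∈ Y.E) (h3Z : e3 ∈ Z.E) (h3h : e3.horiz = false) :
    ∃ g : GridEdge, g ∈ X.E ∧ g ∈ Y.E ∧ g ∈ Z.E := by
  have hrX : e1.pt.2 = X.c.2 := row_eq X h1X h1h
  have hrY : e1.pt.2 = Y.c.2 := row_eq Y h1Y h1h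
  have hqX : e2.pt.1 = X.c.1 := col_eq X h2X h2h
  have hqZ : e2.pt.1 = Z.c.1 := col_eq Z h2Z h2h
  have hqY : e3.pt.1 = Y.c.1 := col_eq Y h3Y h3h
  have hqZ' : e3.pt.1 = Z.c.1 := col_eq Z h3Z h3h
  have hcornX := corners X h1X h2X h1h h2h
  have hcornY := corners Y h1Y h3Y h1h h3h
  have hQY : Y.c.1 = X.c.1 := by rw [← hqY, hqZ', ← hqZ, hqX]
  have hZX : Z.c.1 = X.c.1 := by rw [← hqZ, hqX]
  have hYX : Y.c.2 = X.c.2 := by rw [← hrY, hrX]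
  have hsX := horiz_side X h1X h1h
  have hsY := horiz_side Y h1Y h1h
  have hsh : X.sh = Y.sh := by
    cases hx : X.sh <;> cases hy : Y.sh <;> rw [hx] at hsX <;> rw [hy] at hsY <;>
      simp only [ite_true, ite_false, Bool.false_eq_true] at hsX hsY <;> first | rfl | omega
  have hvX := vert_side X h2X h2h
  have hvY := vert_side Y h3Y h3h
  cases hx : X.sh
  · -- shape ⌝ : take max
    rw [hx] at hvX; simp only [ite_false, Bool.false_eq_true] at hvX
    have hy : Y.sh = false := by rw [← hsh, hx]
    rw [hy] at hvY; simp only [ite_false, Bool.false_eq_true] at hvY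
    refine ⟨⟨(X.c.1, max e2.pt.2 e3.pt.2), false⟩, ?_, ?_, ?_⟩
    · exact betweenV X h2X hcornX.2 h2h (by simp [cornerV]) (le_max_left _ _)
        (by simp [cornerV, hx]; omega)
    · have := betweenV Y h3Y hcornY.2 h3h (by simp [cornerV]) (z := max e2.pt.2 e3.pt.2)
        (le_max_right _ _) (by simp [cornerV, hy]; omega)
      rwa [hQY] at this
    · have := betweenV' Z h2Z h3Z h2h h3h (z := max e2.pt.2 e3.pt.2) (by omega) (by omega)
      rwa [hZX] at this
  · -- shape ⌞ : take min
    rw [hx] at hvX; simp only [ite_true] at hvX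
    have hy : Y.sh = true := by rw [← hsh, hx]
    rw [hy] at hvY; simp only [ite_true] at hvY
    refine ⟨⟨(X.c.1, min e2.pt.2 e3.pt.2), false⟩, ?_, ?_, ?_⟩
    · exact betweenV X hcornX.2 h2X (by simp [cornerV]) h2h
        (by simp [cornerV, hx]; omega) (min_le_left _ _)
    · have := betweenV Y hcornY.2 h3Y (by simp [cornerV]) h3h (z := min e2.pt.2 e3.pt.2)
        (by simp [cornerV, hy]; omega) (min_le_right _ _)
      rwa [hQY] at this
    · have := betweenV' Z h2Z h3Z h2h h3h (z := min e2.pt.2 e3.pt.2) (by omega) (by omega)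
      rwa [hZX] at this

/-- Any three pairwise edge-intersecting shaped paths have a common edge. -/
theorem threeMain (X Y Z : NP)
    (hXY : ∃ e, e ∈ X.E ∧ e ∈ Y.E) (hXZ : ∃ e, e ∈ X.E ∧ e ∈ Z.E)
    (hYZ : ∃ e, e ∈ Y.E ∧ e ∈ Z.E) :
    ∃ g : GridEdge, g ∈ X.E ∧ g ∈ Y.E ∧ g ∈ Z.E := by
  obtain ⟨e1, h1X, h1Y⟩ := hXY
  obtain ⟨e2, h2X, h2Z⟩ := hXZ
  obtain ⟨e3, h3Y, h3Z⟩ := hYZ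
  cases hb1 : e1.horiz <;> cases hb2 : e2.horiz <;> cases hb3 : e3.horiz
  · -- v v v
    exact threeV X Y Z h1X h1Y hb1 h2X h2Z hb2 h3Y h3Z hb3
  · -- v v h : horiz YZ; vert XY XZ : mixed2 on (Y, Z, X)
    obtain ⟨g, hg1, hg2, hg3⟩ := mixed2 Y Z X h3Y h3Z hb3 h1Y h1X hb1 h2Z h2X hb2
    exact ⟨g, hg3, hg1, hg2⟩
  · -- v h v : horiz XZ; vert XY YZ : mixed2 on (X, Z, Y)
    obtain ⟨g, hg1, hg2, hg3⟩ := mixed2 X Z Y h2X h2Z hb2 h1X h1Y hb1 h3Z h3Y hb3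
    exact ⟨g, hg1, hg3, hg2⟩
  · -- v h h : horiz XZ YZ; vert XY : mixed1 on (X, Z, Y)
    obtain ⟨g, hg1, hg2, hg3⟩ := mixed1 X Z Y h2X h2Z hb2 h3Z h3Y hb3 h1X h1Y hb1
    exact ⟨g, hg1, hg3, hg2⟩
  · -- h v v : horiz XY; vert XZ YZ : mixed2 on (X, Y, Z)
    exact mixed2 X Y Z h1X h1Y hb1 h2X h2Z hb2 h3Y h3Z hb3
  · -- h v h : horiz XY YZ; vert XZ : mixed1 on (X, Y, Z)
    exact mixed1 X Y Z h1X h1Y hb1 h3Y h3Z hb3 h2X h2Z hb2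
  · -- h h v : horiz XY XZ; vert YZ : mixed1 on (Y, X, Z)
    obtain ⟨g, hg1, hg2, hg3⟩ := mixed1 Y X Z h1Y h1X hb1 h2X h2Z hb2 h3Y h3Z hb3
    exact ⟨g, hg2, hg1, hg3⟩
  · -- h h h
    exact threeH X Y Z h1X h1Y hb1 h2X h2Z hb2 h3Y h3Z hb3

end HellyAux
namespace HellyAux

/-- The intersection of two shaped paths is an interval in the parametrization
of the first one. -/
theorem inter_ivt (Pp Pi : NP) {e f : GridEdge}
    (heP : e ∈ Pp.E) (hei : e ∈ Pi.E) (hfP : f ∈ Pp.E) (hfi : f ∈ Pi.E)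
    {s : ℤ} (h1 : tpar Pp.sh Pp.c e ≤ s) (h2 : s ≤ tpar Pp.sh Pp.c f) :
    epar Pp.sh Pp.c s ∈ Pi.E := by
  cases hbe : e.horiz <;> cases hbf : f.horiz
  · -- both vertical
    have hcol : e.pt.1 = Pp.c.1 := col_eq Pp heP hbe
    have hcoli : e.pt.1 = Pi.c.1 := col_eq Pi hei hbe
    have hEq : Pi.c.1 = Pp.c.1 := by rw [← hcoli, hcol]
    have hvs := vert_side Pp hfP hbf
    have hvs' := vert_side Pp heP hbe
    cases hp : Pp.sh
    · rw [hp] at hvs hvs'; simp only [ite_false, Bool.false_eq_true] at hvs hvs'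
      rw [hp] at h1 h2
      simp only [tpar, hbe, hbf, Bool.false_eq_true, ite_false] at h1 h2
      have hs : ¬ (s ≤ 0) := by omega
      simp only [epar, ite_false, Bool.false_eq_true, hs, ite_false, if_neg hs]
      have := betweenV Pi hfi hei hbf hbe (z := Pp.c.2 - s) (by omega) (by omega)
      rwa [hEq] at this
    · rw [hp] at hvs hvs'; simp only [ite_true] at hvs hvs'
      rw [hp] at h1 h2
      simp only [tpar, hbe, hbf, Bool.false_eq_true, ite_false, ite_true] at h1 h2
      have hs : ¬ ((0:ℤ) ≤ s) := by omega
      simp only [epar, ite_true, if_neg hs]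
      have := betweenV Pi hfi hei hbf hbe (z := Pp.c.2 - s - 1) (by omega) (by omega)
      rwa [hEq] at this
  · -- e vertical, f horizontal : Pi is bent with the same corner and shape
    have hc1 : Pi.c.1 = Pp.c.1 := by rw [← col_eq Pi hei hbe, col_eq Pp heP hbe]
    have hc2 : Pi.c.2 = Pp.c.2 := by rw [← row_eq Pi hfi hbf, row_eq Pp hfP hbf]
    have hc : Pi.c = Pp.c := Prod.ext hc1 hc2
    have hsf := horiz_side Pp hfP hbf
    have hsf' := horiz_side Pi hfi hbf
    have hsh : Pi.sh = Pp.sh := by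
      cases ha : Pi.sh <;> cases hb : Pp.sh <;> rw [ha] at hsf' <;> rw [hb] at hsf <;>
        simp only [ite_true, ite_false, Bool.false_eq_true] at hsf hsf' <;>
        first | rfl | (rw [hc1] at hsf'; omega)
    rw [← hsh, ← hc] at h1 h2 ⊢
    exact Pi.ivt e hei f hfi s h1 h2
  · -- e horizontal, f vertical : same
    have hc1 : Pi.c.1 = Pp.c.1 := by rw [← col_eq Pi hfi hbf, col_eq Pp hfP hbf]
    have hc2 : Pi.c.2 = Pp.c.2 := by rw [← row_eq Pi hei hbe, row_eq Pp heP hbe]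
    have hc : Pi.c = Pp.c := Prod.ext hc1 hc2
    have hsf := horiz_side Pp heP hbe
    have hsf' := horiz_side Pi hei hbe
    have hsh : Pi.sh = Pp.sh := by
      cases ha : Pi.sh <;> cases hb : Pp.sh <;> rw [ha] at hsf' <;> rw [hb] at hsf <;>
        simp only [ite_true, ite_false, Bool.false_eq_true] at hsf hsf' <;>
        first | rfl | (rw [hc1] at hsf'; omega)
    rw [← hsh, ← hc] at h1 h2 ⊢
    exact Pi.ivt e hei f hfi s h1 h2
  · -- both horizontal
    have hrow : e.pt.2 = Pp.c.2 := row_eq Pp heP hbe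
    have hrowi : e.pt.2 = Pi.c.2 := row_eq Pi hei hbe
    have hEq : Pi.c.2 = Pp.c.2 := by rw [← hrowi, hrow]
    have hhs := horiz_side Pp heP hbe
    have hhs' := horiz_side Pp hfP hbf
    cases hp : Pp.sh
    · rw [hp] at hhs hhs'; simp only [ite_false, Bool.false_eq_true] at hhs hhs'
      rw [hp] at h1 h2
      simp only [tpar, hbe, hbf, Bool.false_eq_true, ite_true, ite_false] at h1 h2
      have hs : s ≤ 0 := by omega
      simp only [epar, ite_false, Bool.false_eq_true, if_pos hs]
      have := betweenH Pi hei hfi hbe hbf (z := Pp.c.1 - 1 + s) (by omega) (by omega)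
      rwa [hEq] at this
    · rw [hp] at hhs hhs'; simp only [ite_true] at hhs hhs'
      rw [hp] at h1 h2
      simp only [tpar, hbe, hbf, Bool.false_eq_true, ite_true, ite_false] at h1 h2
      have hs : (0:ℤ) ≤ s := by omega
      simp only [epar, ite_true, if_pos hs]
      have := betweenH Pi hei hfi hbe hbf (z := Pp.c.1 + s) (by omega) (by omega)
      rwa [hEq] at this

end HellyAux
namespace HellyAux

theorem exists_np (Q : GridPath) (h : ShapeL Q ∨ ShapeUR Q) : ∃ N : NP, N.E = Q.edges := by
  have hex : ∃ (sh : Bool) (c : ℤ × ℤ), ∀ e ∈ Q.edges, onRay sh c e := by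
    rcases h with ⟨c, hc⟩ | ⟨c, hc⟩
    · exact ⟨true, c, fun e he => by
        rcases hc e he with ⟨a, b, d⟩ | ⟨a, b, d⟩ <;> simp [onRay, a, b, d]⟩
    · exact ⟨false, c, fun e he => by
        rcases hc e he with ⟨a, b, d⟩ | ⟨a, b, d⟩ <;> simp [onRay, a, b, d]⟩
  obtain ⟨sh, c, hray⟩ := hex
  exact ⟨⟨Q.edges, sh, c, hray,
    fun e he f hf s h1 h2 => path_ivt hray Q.chain he hf h1 h2⟩, rfl⟩

end HellyAux

theorem shapes_L_UR_helly' {ι : Type*} (P : ι → GridPath)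
    (hb : ∀ i : ι, (P i).bends ≤ 1)
    (hs : ∀ i : ι, ShapeL (P i) ∨ ShapeUR (P i)) :
    HellyEPG P := by
  classical
  intro T hT
  rcases Set.eq_empty_or_nonempty T with hemp | ⟨p, hp⟩
  · exact ⟨⟨(0, 0), true⟩, fun i hi => absurd hi (by rw [hemp]; simp)⟩
  choose N hNE using fun i => HellyAux.exists_np (P i) (hs i)
  have hT' : ∀ i ∈ T, ∀ j ∈ T, ∃ e, e ∈ (N i).E ∧ e ∈ (N j).E := by
    intro i hi j hj
    obtain ⟨e, h1, h2⟩ := hT i hi j hj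
    exact ⟨e, by rw [hNE i]; exact h1, by rw [hNE j]; exact h2⟩
  set sp := (N p).sh with hsp
  set cp := (N p).c with hcp
  set S : ι → ℤ → Prop := fun i s =>
    HellyAux.epar sp cp s ∈ (N p).E ∧ HellyAux.epar sp cp s ∈ (N i).E with hS
  have hSne : ∀ i ∈ T, ∃ s, S i s := by
    intro i hi
    obtain ⟨e, hep, hei⟩ := hT' p hp i hi
    refine ⟨HellyAux.tpar sp cp e, ?_, ?_⟩ <;>
      rw [HellyAux.epar_tpar ((N p).ray e hep)] <;> assumption
  have hmem : ∀ i, ∀ s, S i s → s ∈ ((N p).E.map (HellyAux.tpar sp cp)) := by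
    intro i s hsi
    have := List.mem_map_of_mem (f := HellyAux.tpar sp cp) hsi.1
    rwa [HellyAux.tpar_epar] at this
  obtain ⟨e0, he0, -⟩ := hT' p hp p hp
  have hLfin : ((N p).E.map (HellyAux.tpar sp cp)).toFinset.Nonempty :=
    ⟨HellyAux.tpar sp cp e0, List.mem_toFinset.mpr (List.mem_map_of_mem he0)⟩
  have hlow : ∀ i, ∀ s, S i s →
      ((N p).E.map (HellyAux.tpar sp cp)).toFinset.min' hLfin ≤ s :=
    fun i s hs' => Finset.min'_le _ _ (List.mem_toFinset.mpr (hmem i s hs'))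
  have hhigh : ∀ i, ∀ s, S i s →
      s ≤ ((N p).E.map (HellyAux.tpar sp cp)).toFinset.max' hLfin :=
    fun i s hs' => Finset.le_max' _ _ (List.mem_toFinset.mpr (hmem i s hs'))
  have hleast : ∀ i ∈ T, ∃ a, S i a ∧ ∀ z, S i z → a ≤ z := fun i hi =>
    Int.exists_least_of_bdd ⟨_, fun z hz => hlow i z hz⟩ (hSne i hi)
  obtain ⟨astar, ⟨i0, hi0, hSi0, hi0least⟩, hub⟩ :=
    Int.exists_greatest_of_bdd (P := fun z => ∃ i ∈ T, S i z ∧ ∀ w, S i w → z ≤ w)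
      ⟨_, fun z hz => by obtain ⟨i, hi, hz1, -⟩ := hz; exact hhigh i z hz1⟩
      (by obtain ⟨a, ha⟩ := hleast p hp; exact ⟨a, p, hp, ha⟩)
  refine ⟨HellyAux.epar sp cp astar, ?_⟩
  intro j hj
  rw [← hNE j]
  obtain ⟨g, hg0, hgj, hgp⟩ := HellyAux.threeMain (N i0) (N j) (N p)
    (hT' i0 hi0 j hj) (hT' i0 hi0 p hp) (hT' j hj p hp)
  have hgP : HellyAux.epar sp cp (HellyAux.tpar sp cp g) = g :=
    HellyAux.epar_tpar ((N p).ray g hgp)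
  have hsg : S i0 (HellyAux.tpar sp cp g) := ⟨by rw [hgP]; exact hgp, by rw [hgP]; exact hg0⟩
  have hsgj : S j (HellyAux.tpar sp cp g) := ⟨by rw [hgP]; exact hgp, by rw [hgP]; exact hgj⟩
  obtain ⟨aj, hajS, hajle⟩ := hleast j hj
  have h1 : aj ≤ astar := hub aj ⟨j, hj, hajS, hajle⟩
  have h2 : astar ≤ HellyAux.tpar sp cp g := hi0least _ hsg
  exact HellyAux.inter_ivt (N p) (N j) hajS.1 hajS.2 hsgj.1 hsgj.2
    (by rw [HellyAux.tpar_epar]; exact h1) (by rw [HellyAux.tpar_epar]; exact h2)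

/-- A family of single-bend paths each of shape `⌞` or `⌝` satisfies the Helly
property. -/
theorem shapes_L_UR_helly {ι : Type*} (P : ι → GridPath)
    (hb : ∀ i : ι, (P i).bends ≤ 1)
    (hs : ∀ i : ι, ShapeL (P i) ∨ ShapeUR (P i)) :
    HellyEPG P := shapes_L_UR_helly' P hb hs
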